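/- arXiv:1505.08128 — 2 statements merged into one kernel-verified Lean document; each statement's English description precedes it below -/
import Mathlib

section
/- Let A be an n×n real matrix all of whose leading principal minors are positive. Then there exists an n×n diagonal matrix D with positive diagonal entries such that all eigenvalues of D·A are real, positive, and simple. -/
/-!
Induction on `n`. Given `d` making `diagonal d * A'` have simple positive spectrum
`ν₁ < ⋯ < νₙ`, where `A'` is the leading `n × n` block of `A`, put
`M ε = diagonal (snoc d ε) * A`. The last row of `M 0` vanishes, so its eigenvalues are
`0 < ν₁ < ⋯ < νₙ`, and its characteristic polynomial alternates in sign at points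
`y₀ < ⋯ < yₙ` interlacing them. These signs survive for small `ε > 0`; in addition,
`(-1)^(n+1) χ_{M ε}(0) = det (M ε) > 0` because `det A > 0`. Thus `χ_{M ε}` changes sign
on each of the `n + 1` intervals `(0, y₀), (y₀, y₁), …, (yₙ₋₁, yₙ)`, and the intermediate
value theorem gives `n + 1` distinct positive roots.
-/

open Polynomial Matrix Filter Topology Finset

lemma Finset.pos_neg_one_pow_card_filter_neg_mul_prod {ι R : Type*} [CommRing R]
    [LinearOrder R] [IsStrictOrderedRing R] (s : Finset ι) (f : ι → R)
    (hf : ∀ i ∈ s, f i ≠ 0) :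
    0 < (-1) ^ #{i ∈ s | f i < 0} * ∏ i ∈ s, f i := by
  have hneg : 0 < ∏ i ∈ s with f i < 0, -f i :=
    prod_pos fun i hi => neg_pos.2 (mem_filter.1 hi).2
  have hpos : 0 < ∏ i ∈ s with ¬f i < 0, f i := prod_pos fun i hi => by
    obtain ⟨hs, hi⟩ := mem_filter.1 hi
    exact lt_of_le_of_ne (not_lt.1 hi) (hf i hs).symm
  calc 0 < (∏ i ∈ s with f i < 0, -f i) * ∏ i ∈ s with ¬f i < 0, f i := mul_pos hneg hpos
    _ = _ := by rw [prod_neg, ← s.prod_filter_mul_prod_filter_not (f · < 0)]; ring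

lemma mul_neg_of_pos_neg_one_pow_mul {R : Type*} [CommRing R] [LinearOrder R]
    [IsStrictOrderedRing R] {a b : R} (k : ℕ)
    (ha : 0 < (-1) ^ (k + 1) * a) (hb : 0 < (-1) ^ k * b) : a * b < 0 := by
  rcases neg_one_pow_eq_or R k with h | h <;> simp only [pow_succ, h] at ha hb <;> nlinarith

lemma StrictMono.exists_interlacing {α : Type*} [LinearOrder α] [DenselyOrdered α]
    [NoMaxOrder α] {m : ℕ} {μ : Fin m → α} (hμ : StrictMono μ) :
    ∃ y : Fin m → α, ∀ i j, (y j < μ i ↔ j < i) ∧ (μ i < y j ↔ i ≤ j) := by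
  have key (j : Fin m) : ∃ y, μ j < y ∧ ∀ i, j < i → y < μ i := by
    cases m with
    | zero => exact j.elim0
    | succ m =>
      induction j using Fin.lastCases with
      | last =>
        obtain ⟨y, hy⟩ := exists_gt (μ (Fin.last m))
        exact ⟨y, hy, fun i hi => absurd (Fin.le_last i) hi.not_ge⟩
      | cast k =>
        obtain ⟨y, hky, hy⟩ := exists_between (hμ k.castSucc_lt_succ)
        exact ⟨y, hky, fun i hi => hy.trans_le (hμ.monotone (Fin.castSucc_lt_iff_succ_le.1 hi))⟩
  choose y hμy hyμ using key
  have hle {i j} (hij : i ≤ j) : μ i < y j := (hμ.monotone hij).trans_lt (hμy j)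
  exact ⟨y, fun i j => ⟨⟨fun h => not_le.1 fun hij => (hle hij).not_gt h, hyμ j i⟩,
    ⟨fun h => not_lt.1 fun hji => (hyμ j i hji).not_gt h, hle⟩⟩⟩

namespace Polynomial

lemma pos_neg_one_pow_mul_eval_prod_X_sub_C_of_interlacing {m : ℕ} {μ : Fin (m + 1) → ℝ}
    {y : ℝ} {j : Fin (m + 1)} (hy : ∀ i, (y < μ i ↔ j < i) ∧ (μ i < y ↔ i ≤ j)) :
    0 < (-1) ^ (m - (j : ℕ)) * (∏ i, (X - C (μ i))).eval y := by
  have hcard : #{i | y - μ i < 0} = m - (j : ℕ) := by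
    have : ({i | y - μ i < 0} : Finset _) = Ioi j := by ext i; simp [(hy i).1]
    rw [this, Fin.card_Ioi, Nat.add_sub_cancel]
  rw [eval_prod, ← hcard]
  simpa using pos_neg_one_pow_card_filter_neg_mul_prod univ (fun i => y - μ i)
    fun i _ => sub_ne_zero.2 fun h => (lt_or_ge j i).elim
      (fun hji => ((hy i).1.2 hji).ne h) fun hij => ((hy i).2.2 hij).ne' h

lemma exists_mem_Ioo_isRoot_of_mul_neg {p : ℝ[X]} {a b : ℝ} (hab : a ≤ b)
    (h : p.eval a * p.eval b < 0) : ∃ r ∈ Set.Ioo a b, p.IsRoot r := by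
  rcases mul_neg_iff.1 h with ⟨ha, hb⟩ | ⟨ha, hb⟩
  · exact intermediate_value_Ioo' hab p.continuousOn ⟨hb, ha⟩
  · exact intermediate_value_Ioo hab p.continuousOn ⟨ha, hb⟩

lemma Monic.eq_prod_X_sub_C_of_injective {K : Type*} [Field K] {p : K[X]} {m : ℕ}
    (hp : p.Monic) (hdeg : p.natDegree = m) {r : Fin m → K} (hr : Function.Injective r)
    (hroot : ∀ j, p.IsRoot (r j)) : p = ∏ j, (X - C (r j)) := by
  refine eq_of_monic_of_dvd_of_natDegree_le
    (monic_prod_of_monic _ _ fun j _ => monic_X_sub_C _) hp ?_ ?_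
  · exact Fintype.prod_dvd_of_coprime (pairwise_coprime_X_sub_C hr)
      fun j => dvd_iff_isRoot.2 (hroot j)
  · rw [natDegree_prod_of_monic _ _ fun j _ => monic_X_sub_C _]
    simp [hdeg]

lemma Monic.exists_strictMono_eq_prod_X_sub_C_of_alternating {p : ℝ[X]} {m : ℕ}
    (hp : p.Monic) (hdeg : p.natDegree = m) {x : Fin (m + 1) → ℝ} (hx : StrictMono x)
    (hsign : ∀ j : Fin (m + 1), 0 < (-1) ^ (m - (j : ℕ)) * p.eval (x j)) :
    ∃ r : Fin m → ℝ, StrictMono r ∧ (∀ j, x j.castSucc < r j) ∧ p = ∏ j, (X - C (r j)) := by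
  have hchange (j : Fin m) : p.eval (x j.castSucc) * p.eval (x j.succ) < 0 := by
    have hj := hsign j.castSucc
    rw [Fin.val_castSucc, show m - j = m - (j + 1) + 1 by omega] at hj
    exact mul_neg_of_pos_neg_one_pow_mul _ hj (hsign j.succ)
  choose r hr hroot using fun j =>
    exists_mem_Ioo_isRoot_of_mul_neg (hx j.castSucc_lt_succ).le (hchange j)
  have hmono : StrictMono r := fun i j hij =>
    calc r i < x i.succ := (hr i).2
      _ ≤ x j.castSucc := hx.monotone (Fin.succ_le_castSucc_iff.2 hij)
      _ < r j := (hr j).1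
  exact ⟨r, hmono, fun j => (hr j).1, hp.eq_prod_X_sub_C_of_injective hdeg hmono.injective hroot⟩

end Polynomial

namespace Matrix

lemma charmatrix_submatrix {m n R : Type*} [CommRing R] [Fintype m] [Fintype n]
    [DecidableEq m] [DecidableEq n] (B : Matrix n n R) {e : m → n} (he : Function.Injective e) :
    (charmatrix B).submatrix e e = charmatrix (B.submatrix e e) := by
  ext i j
  by_cases h : i = j <;> simp [he.eq_iff, h]

lemma charpoly_eq_X_mul_of_row_eq_zero {n : ℕ} {R : Type*} [CommRing R]
    {B : Matrix (Fin (n + 1)) (Fin (n + 1)) R} {i : Fin (n + 1)} (hB : B i = 0) :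
    B.charpoly = X * (B.submatrix i.succAbove i.succAbove).charpoly := by
  have hrow (j : Fin (n + 1)) : charmatrix B i j = if i = j then X else 0 := by
    rw [charmatrix_apply, congrFun hB j]
    by_cases h : i = j <;> simp [h]
  rw [charpoly, det_succ_row _ i,
    sum_eq_single i (fun j _ hj => by simp only [hrow, if_neg hj.symm, mul_zero, zero_mul])
      (by simp), hrow, if_pos rfl, Even.neg_one_pow ⟨_, rfl⟩, one_mul,
    charmatrix_submatrix _ Fin.succAbove_right_injective, charpoly]

lemma pos_neg_one_pow_mul_eval_zero_charpoly {ι : Type*} [Fintype ι] [DecidableEq ι]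
    {M : Matrix ι ι ℝ} (hM : 0 < M.det) : 0 < (-1) ^ Fintype.card ι * M.charpoly.eval 0 := by
  rwa [det_eq_sign_charpoly_coeff, coeff_zero_eq_eval_zero] at hM

lemma charpoly_diagonal_snoc_zero_mul {n : ℕ} {R : Type*} [CommRing R] (d : Fin n → R)
    (A : Matrix (Fin (n + 1)) (Fin (n + 1)) R) :
    (diagonal (Fin.snoc d 0) * A).charpoly =
      X * (diagonal d * A.submatrix Fin.castSucc Fin.castSucc).charpoly := by
  rw [charpoly_eq_X_mul_of_row_eq_zero (i := Fin.last n) (by ext; simp [diagonal_mul]),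
    Fin.succAbove_last]
  congr 2
  ext i j
  simp [diagonal_mul]

lemma continuous_eval_charpoly_diagonal_snoc_mul {n : ℕ} (d : Fin n → ℝ)
    (A : Matrix (Fin (n + 1)) (Fin (n + 1)) ℝ) (t : ℝ) :
    Continuous fun ε => (diagonal (Fin.snoc d ε) * A).charpoly.eval t := by
  simp only [eval_charpoly]
  exact (continuous_const.sub ((continuous_const.finSnoc continuous_id).matrix_diagonal.matrix_mul
    continuous_const)).matrix_det

def HasSimplePosSpectrum {n : ℕ} (M : Matrix (Fin n) (Fin n) ℝ) : Prop :=
  ∃ f : Fin n → ℝ, StrictMono f ∧ (∀ i, 0 < f i) ∧ M.charpoly = ∏ i, (X - C (f i))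

theorem exists_pos_hasSimplePosSpectrum_diagonal_snoc_mul {n : ℕ}
    {A : Matrix (Fin (n + 1)) (Fin (n + 1)) ℝ} (hA : 0 < A.det) {d : Fin n → ℝ}
    (hd : ∀ i, 0 < d i)
    (h : (diagonal d * A.submatrix Fin.castSucc Fin.castSucc).HasSimplePosSpectrum) :
    ∃ ε > 0, (diagonal (Fin.snoc d ε) * A).HasSimplePosSpectrum := by
  obtain ⟨ν, hν, hνpos, hchar⟩ := h
  set p : ℝ → ℝ[X] := fun ε => (diagonal (Fin.snoc d ε) * A).charpoly
  set μ : Fin (n + 1) → ℝ := Fin.cons 0 ν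
  have hμ : StrictMono μ := Fin.strictMono_cons.2 ⟨hνpos, hν⟩
  have hp0 : p 0 = ∏ i, (X - C (μ i)) := by
    simp [p, charpoly_diagonal_snoc_zero_mul, hchar, Fin.prod_univ_succ, μ]
  obtain ⟨y, hy⟩ := hμ.exists_interlacing
  have hsign0 (j : Fin (n + 1)) : 0 < (-1) ^ (n - (j : ℕ)) * (p 0).eval (y j) :=
    hp0 ▸ pos_neg_one_pow_mul_eval_prod_X_sub_C_of_interlacing (hy · j)
  have hsmall : ∀ᶠ ε in 𝓝[>] 0,
      0 < ε ∧ ∀ j : Fin (n + 1), 0 < (-1) ^ (n - (j : ℕ)) * (p ε).eval (y j) := by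
    have hcont (j : Fin (n + 1)) :
        Continuous fun ε => (-1) ^ (n - (j : ℕ)) * (p ε).eval (y j) :=
      continuous_const.mul (continuous_eval_charpoly_diagonal_snoc_mul d A (y j))
    filter_upwards [self_mem_nhdsWithin, nhdsWithin_le_nhds (eventually_all.2 fun j =>
      ((hcont j).tendsto 0).eventually (lt_mem_nhds (hsign0 j)))] with ε hε hj using ⟨hε, hj⟩
  obtain ⟨ε, hε, hsign⟩ := hsmall.exists
  have hsign_zero : 0 < (-1) ^ (n + 1) * (p ε).eval 0 := by
    refine Fintype.card_fin (n + 1) ▸ pos_neg_one_pow_mul_eval_zero_charpoly ?_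
    rw [det_mul, det_diagonal, Fin.prod_snoc]
    exact mul_pos (mul_pos (prod_pos fun i _ => hd i) hε) hA
  have hx : StrictMono (Fin.cons 0 y : Fin (n + 2) → ℝ) := Fin.strictMono_cons.2
    ⟨fun j => (hy 0 j).2.2 (Fin.zero_le j),
      fun j k hjk => ((hy k j).1.2 hjk).trans ((hy k k).2.2 le_rfl)⟩
  obtain ⟨r, hr, hxr, hfac⟩ :=
    (charpoly_monic (diagonal (Fin.snoc d ε) * A)).exists_strictMono_eq_prod_X_sub_C_of_alternating
      (by rw [charpoly_natDegree_eq_dim, Fintype.card_fin]) hx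
      (Fin.cases (by simpa using hsign_zero) fun j => by simpa using hsign j)
  exact ⟨ε, hε, r, hr, fun j => (hx.monotone (Fin.zero_le _)).trans_lt (hxr j), hfac⟩

theorem exists_pos_diagonal_mul_hasSimplePosSpectrum {n : ℕ} (A : Matrix (Fin n) (Fin n) ℝ)
    (hminors : ∀ k (h : k ≤ n), 0 < (A.submatrix (Fin.castLE h) (Fin.castLE h)).det) :
    ∃ d : Fin n → ℝ, (∀ i, 0 < d i) ∧ (diagonal d * A).HasSimplePosSpectrum := by
  induction n with
  | zero => exact ⟨![], isEmptyElim, ![], Subsingleton.strictMono _, isEmptyElim, by simp⟩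
  | succ n ih =>
    obtain ⟨d, hd, hspec⟩ := ih (A.submatrix Fin.castSucc Fin.castSucc)
      fun k hk => hminors k (hk.trans n.le_succ)
    obtain ⟨ε, hε, hspec'⟩ := exists_pos_hasSimplePosSpectrum_diagonal_snoc_mul
      (by simpa using hminors (n + 1) le_rfl) hd hspec
    exact ⟨Fin.snoc d ε, Fin.lastCases (by simpa) (by simpa), hspec'⟩

end Matrix

/-- Fisher–Fuller theorem: if all leading principal minors of a real `n × n`
matrix `A` are positive, there is a positive diagonal matrix `D` such that all
eigenvalues of `D * A` are real, positive and simple (the characteristic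
polynomial splits into distinct positive real linear factors). -/
theorem fisher_fuller (n : ℕ) (A : Matrix (Fin n) (Fin n) ℝ)
    (hminors : ∀ k (h : k ≤ n),
      0 < (A.submatrix (Fin.castLE h) (Fin.castLE h)).det) :
    ∃ d : Fin n → ℝ, (∀ i, 0 < d i) ∧
      ∃ f : Fin n → ℝ, Function.Injective f ∧ (∀ i, 0 < f i) ∧
        (Matrix.diagonal d * A).charpoly =
          ∏ i : Fin n, (Polynomial.X - Polynomial.C (f i)) := by
  obtain ⟨d, hd, f, hf, hfpos, hchar⟩ :=
    Matrix.exists_pos_diagonal_mul_hasSimplePosSpectrum A hminors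
  exact ⟨d, hd, f, hf.injective, hfpos, hchar⟩
end

section
/- Let A be an n×n real matrix all of whose leading principal minors are nonzero. Then there exists an n×n real diagonal matrix D such that all eigenvalues of D·A have positive real part. -/
/-!
Gaussian elimination gives `A = L * U` with `L` unit lower triangular and `U` upper triangular
with nonzero diagonal. Take `D = diag (t ^ (2 i) / U i i)`. The spectrum of `D * L * U` is that
of `U * D * L`, and conjugating by `diag (t ^ i)` turns this into `diag (t ^ (2 i)) * P t`, where
the conjugation damps the off-diagonal entries of `U` and `L` by positive powers of `t`, so that
`P t → 1` as `t → 0`. For small `t > 0` the matrix `P t`, and hence its positive row scaling, is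
strictly diagonally dominant with positive diagonal, so by Gershgorin every eigenvalue has
positive real part.
-/

open Finset Filter Topology

namespace Matrix

section LU

theorem fromBlocks_mul_eq_mul_fromBlocks {m o R : Type*} [Fintype m] [DecidableEq m]
    [Fintype o] [DecidableEq o] [CommRing R] {L U : Matrix m m R} (hL : IsUnit L.det)
    (hU : IsUnit U.det) (B : Matrix m o R) (C : Matrix o m R) (D : Matrix o o R) :
    fromBlocks (L * U) B C D =
      fromBlocks L 0 (C * U⁻¹) 1 * fromBlocks U (L⁻¹ * B) 0 (D - C * U⁻¹ * (L⁻¹ * B)) := by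
  rw [fromBlocks_multiply]
  simp [mul_nonsing_inv_cancel_left _ _ hL, nonsing_inv_mul_cancel_right _ _ hU]

variable {n m : ℕ} {R : Type*} [Zero R]

theorem IsLowerTriangular.reindex_fromBlocks {L : Matrix (Fin n) (Fin n) R}
    {D : Matrix (Fin m) (Fin m) R} (hL : L.IsLowerTriangular) (hD : D.IsLowerTriangular)
    (C : Matrix (Fin m) (Fin n) R) :
    (reindex finSumFinEquiv finSumFinEquiv (fromBlocks L 0 C D)).IsLowerTriangular := by
  rw [IsLowerTriangular, blockTriangular_reindex_iff]
  rintro (i | i) (j | j) hij <;>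
    simp only [Function.comp_apply, finSumFinEquiv_apply_left, finSumFinEquiv_apply_right,
      OrderDual.toDual_lt_toDual, Fin.lt_def, Fin.val_castAdd, Fin.val_natAdd] at hij
  · exact hL (Fin.lt_def.2 hij)
  · rfl
  · omega
  · exact hD (Fin.lt_def.2 (by omega) : i < j)

theorem IsUpperTriangular.reindex_fromBlocks {U : Matrix (Fin n) (Fin n) R}
    {D : Matrix (Fin m) (Fin m) R} (hU : U.IsUpperTriangular) (hD : D.IsUpperTriangular)
    (B : Matrix (Fin n) (Fin m) R) :
    (reindex finSumFinEquiv finSumFinEquiv (fromBlocks U B 0 D)).IsUpperTriangular := by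
  rw [IsUpperTriangular, blockTriangular_reindex_iff]
  rintro (i | i) (j | j) hij <;>
    simp only [Function.comp_apply, finSumFinEquiv_apply_left, finSumFinEquiv_apply_right,
      id_eq, Fin.lt_def, Fin.val_castAdd, Fin.val_natAdd] at hij
  · exact hU (Fin.lt_def.2 hij)
  · omega
  · rfl
  · exact hD (Fin.lt_def.2 (by omega) : j < i)

variable {K : Type*} [Field K]

structure IsLUFactorization {ι : Type*} [Fintype ι] [LinearOrder ι] (A L U : Matrix ι ι K) :
    Prop where
  lower : L.IsLowerTriangular
  lower_diag : ∀ i, L i i = 1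
  upper : U.IsUpperTriangular
  upper_diag_ne_zero : ∀ i, U i i ≠ 0
  eq_mul : A = L * U

namespace IsLUFactorization

variable {ι : Type*} [Fintype ι] [LinearOrder ι] {A L U : Matrix ι ι K}

theorem isUnit_det_lower (h : IsLUFactorization A L U) : IsUnit L.det := by
  simp [det_of_isLowerTriangular L h.lower, h.lower_diag]

theorem isUnit_det_upper (h : IsLUFactorization A L U) : IsUnit U.det := by
  simpa [det_of_isUpperTriangular h.upper, Finset.prod_ne_zero_iff] using h.upper_diag_ne_zero

end IsLUFactorization

theorem exists_isLUFactorization_succ {A : Matrix (Fin (n + 1)) (Fin (n + 1)) K}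
    (hA : A.det ≠ 0) {L U : Matrix (Fin n) (Fin n) K}
    (hLU : IsLUFactorization (A.submatrix Fin.castSucc Fin.castSucc) L U) :
    ∃ L U, IsLUFactorization A L U := by
  set e : Fin n ⊕ Fin 1 ≃ Fin (n + 1) := finSumFinEquiv
  set B := A.submatrix e e
  have hB : A = reindex e e (fromBlocks (L * U) B.toBlocks₁₂ B.toBlocks₂₁ B.toBlocks₂₂) := by
    rw [← hLU.eq_mul, show A.submatrix Fin.castSucc Fin.castSucc = B.toBlocks₁₁ from rfl,
      fromBlocks_toBlocks]
    simp [B, reindex_apply]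
  rw [fromBlocks_mul_eq_mul_fromBlocks hLU.isUnit_det_lower hLU.isUnit_det_upper] at hB
  set S := B.toBlocks₂₂ - B.toBlocks₂₁ * U⁻¹ * (L⁻¹ * B.toBlocks₁₂)
  have hS : S 0 0 ≠ 0 := by
    rw [hB, det_reindex_self, det_mul, det_fromBlocks_zero₁₂, det_fromBlocks_zero₂₁, det_one,
      mul_one, det_fin_one S] at hA
    exact right_ne_zero_of_mul (right_ne_zero_of_mul hA)
  refine ⟨reindex e e (fromBlocks L 0 (B.toBlocks₂₁ * U⁻¹) 1),
    reindex e e (fromBlocks U (L⁻¹ * B.toBlocks₁₂) 0 S), ⟨?_, ?_, ?_, ?_, ?_⟩⟩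
  · exact hLU.lower.reindex_fromBlocks blockTriangular_one _
  · intro i
    induction i using Fin.lastCases <;> simp [e, hLU.lower_diag]
  · exact hLU.upper.reindex_fromBlocks
      (fun i j hij => absurd hij (by simp [Subsingleton.elim i j])) _
  · intro i
    induction i using Fin.lastCases <;> simp [e, hLU.upper_diag_ne_zero, hS]
  · rw [hB, reindex_apply, reindex_apply, reindex_apply, submatrix_mul_equiv]

theorem exists_isLUFactorization :
    ∀ {n : ℕ} (A : Matrix (Fin n) (Fin n) K),
      (∀ k (h : k ≤ n), (A.submatrix (Fin.castLE h) (Fin.castLE h)).det ≠ 0) →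
        ∃ L U, IsLUFactorization A L U
  | 0, _, _ => ⟨1, 1, blockTriangular_one, (·.elim0), blockTriangular_one, (·.elim0),
      Subsingleton.elim _ _⟩
  | n + 1, A, hA => by
    obtain ⟨L, U, hLU⟩ := exists_isLUFactorization (A.submatrix Fin.castSucc Fin.castSucc)
      fun k hk => by rw [submatrix_submatrix]; exact hA k (hk.trans n.le_succ)
    exact exists_isLUFactorization_succ (by simpa using hA (n + 1) le_rfl) hLU

end LU

section DiagDominant

variable {ι : Type*} [Fintype ι] [DecidableEq ι]

def IsPosDiagDominant (M : Matrix ι ι ℝ) : Prop :=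
  ∀ i, ∑ j ∈ univ.erase i, |M i j| < M i i

theorem isPosDiagDominant_one : (1 : Matrix ι ι ℝ).IsPosDiagDominant := fun i => by
  rw [one_apply_eq, Finset.sum_eq_zero fun j hj => by
    rw [one_apply_ne (ne_of_mem_erase hj).symm, abs_zero]]
  exact one_pos

theorem isOpen_setOf_isPosDiagDominant : IsOpen {M : Matrix ι ι ℝ | M.IsPosDiagDominant} := by
  simp only [IsPosDiagDominant, Set.ofPred_forall]
  exact isOpen_iInter_of_finite fun i => isOpen_lt (by fun_prop) (by fun_prop)

theorem IsPosDiagDominant.diagonal_mul {M : Matrix ι ι ℝ} (hM : M.IsPosDiagDominant)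
    {c : ι → ℝ} (hc : ∀ i, 0 < c i) : (diagonal c * M).IsPosDiagDominant := by
  intro i
  simp only [Matrix.diagonal_mul, abs_mul, abs_of_pos (hc i), ← Finset.mul_sum]
  exact mul_lt_mul_of_pos_left (hM i) (hc i)

theorem IsPosDiagDominant.re_pos_of_mem_spectrum {M : Matrix ι ι ℝ}
    (hM : M.IsPosDiagDominant) {μ : ℂ} (hμ : μ ∈ spectrum ℂ (M.map Complex.ofReal)) :
    0 < μ.re := by
  rw [← spectrum_toLin', ← Module.End.hasEigenvalue_iff_mem_spectrum] at hμ
  obtain ⟨k, hk⟩ := eigenvalue_mem_ball hμ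
  simp only [Metric.mem_closedBall, dist_eq_norm, map_apply, Complex.norm_real,
    Real.norm_eq_abs] at hk
  have hre : M k k - μ.re ≤ ‖μ - M k k‖ := by
    simpa using (neg_le_abs _).trans (Complex.abs_re_le_norm (μ - M k k))
  linarith [hM k]

end DiagDominant

theorem spectrum_mul_comm {ι K : Type*} [Fintype ι] [DecidableEq ι] [Field K]
    (A B : Matrix ι ι K) : spectrum K (A * B) = spectrum K (B * A) := by
  ext μ
  rw [mem_spectrum_iff_isRoot_charpoly, mem_spectrum_iff_isRoot_charpoly, charpoly_mul_comm]

theorem spectrum_map_ofReal_mul_comm {ι : Type*} [Fintype ι] [DecidableEq ι]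
    (A B : Matrix ι ι ℝ) :
    spectrum ℂ ((A * B).map Complex.ofReal) = spectrum ℂ ((B * A).map Complex.ofReal) := by
  change spectrum ℂ ((A * B).map Complex.ofRealHom) = spectrum ℂ ((B * A).map Complex.ofRealHom)
  rw [Matrix.map_mul, Matrix.map_mul, spectrum_mul_comm]

section OffDiagScale

variable {n : ℕ}

/-- For `t ≠ 0` this is `diag (t ^ i)⁻¹ * M * diag (t ^ i)` if `M` is upper triangular and
`diag (t ^ i) * M * diag (t ^ i)⁻¹` if `M` is lower triangular, but it is also defined and
continuous at `t = 0`. -/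
def offDiagScale (t : ℝ) (M : Matrix (Fin n) (Fin n) ℝ) : Matrix (Fin n) (Fin n) ℝ :=
  of fun i j => t ^ Nat.dist i j * M i j

theorem offDiagScale_zero (M : Matrix (Fin n) (Fin n) ℝ) :
    M.offDiagScale 0 = diagonal fun i => M i i := by
  ext i j
  rcases eq_or_ne i j with rfl | hij
  · simp [offDiagScale]
  · have : Nat.dist i j ≠ 0 := fun h => hij (Fin.ext (Nat.eq_of_dist_eq_zero h))
    simp [offDiagScale, hij, this]

theorem continuous_offDiagScale (M : Matrix (Fin n) (Fin n) ℝ) :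
    Continuous fun t => M.offDiagScale t :=
  continuous_pi fun _ => continuous_pi fun _ => by unfold offDiagScale; fun_prop

theorem IsUpperTriangular.diagonal_pow_mul_offDiagScale {M : Matrix (Fin n) (Fin n) ℝ}
    (hM : M.IsUpperTriangular) (t : ℝ) :
    diagonal (fun i : Fin n => t ^ (i : ℕ)) * M.offDiagScale t =
      M * diagonal fun i : Fin n => t ^ (i : ℕ) := by
  ext i j
  rw [Matrix.diagonal_mul, mul_diagonal, offDiagScale, of_apply]
  rcases le_or_gt i j with hij | hji
  · rw [Nat.dist_eq_sub_of_le hij, ← mul_assoc, ← pow_add, Nat.add_sub_cancel' hij, mul_comm]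
  · simp [hM hji]

theorem IsLowerTriangular.offDiagScale_mul_diagonal_pow {M : Matrix (Fin n) (Fin n) ℝ}
    (hM : M.IsLowerTriangular) (t : ℝ) :
    M.offDiagScale t * diagonal (fun i : Fin n => t ^ (i : ℕ)) =
      diagonal (fun i : Fin n => t ^ (i : ℕ)) * M := by
  ext i j
  rw [Matrix.diagonal_mul, mul_diagonal, offDiagScale, of_apply]
  rcases le_or_gt j i with hji | hij
  · rw [Nat.dist_eq_sub_of_le_right hji, mul_right_comm, ← pow_add, Nat.sub_add_cancel hji]
  · simp [hM hij]

theorem spectrum_diagonal_mul_lu {L U : Matrix (Fin n) (Fin n) ℝ} (hL : L.IsLowerTriangular)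
    (hU : U.IsUpperTriangular) (s : Fin n → ℝ) (t : ℝ) :
    spectrum ℂ ((diagonal (fun i : Fin n => t ^ (2 * (i : ℕ)) * s i) * (L * U)).map
        Complex.ofReal) =
      spectrum ℂ ((diagonal (fun i : Fin n => t ^ (2 * (i : ℕ))) *
        (U.offDiagScale t * diagonal s * L.offDiagScale t)).map Complex.ofReal) := by
  set E := diagonal fun i : Fin n => t ^ (i : ℕ) with hE_def
  have hD : diagonal (fun i : Fin n => t ^ (2 * (i : ℕ)) * s i) = E * diagonal s * E := by
    simp only [E, diagonal_mul_diagonal]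
    congr 1; ext i; ring
  have hE : diagonal (fun i : Fin n => t ^ (2 * (i : ℕ))) = E * E := by
    simp only [E, diagonal_mul_diagonal]
    congr 1; ext i; ring
  calc _ = spectrum ℂ ((U * (E * diagonal s * (E * L))).map Complex.ofReal) := by
        rw [hD, ← Matrix.mul_assoc, spectrum_map_ofReal_mul_comm]; simp only [Matrix.mul_assoc]
    _ = spectrum ℂ ((U * E * diagonal s * L.offDiagScale t * E).map Complex.ofReal) := by
        rw [Matrix.mul_assoc _ (L.offDiagScale t), hL.offDiagScale_mul_diagonal_pow]
        simp only [Matrix.mul_assoc, hE_def]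
    _ = _ := by
        rw [spectrum_map_ofReal_mul_comm, hE, ← hU.diagonal_pow_mul_offDiagScale]
        simp only [Matrix.mul_assoc, hE_def]

end OffDiagScale

end Matrix

open Matrix

/-- If all leading principal minors of a real `n × n` matrix `A` are nonzero,
there is a real diagonal matrix `D` such that all (complex) eigenvalues of
`D * A` have positive real part. -/
theorem exists_diagonal_stabilizing (n : ℕ) (A : Matrix (Fin n) (Fin n) ℝ)
    (hminors : ∀ k (h : k ≤ n),
      (A.submatrix (Fin.castLE h) (Fin.castLE h)).det ≠ 0) :
    ∃ d : Fin n → ℝ,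
      ∀ μ ∈ spectrum ℂ ((Matrix.diagonal d * A).map (Complex.ofReal)),
        0 < μ.re := by
  obtain ⟨L, U, hLU⟩ := exists_isLUFactorization A hminors
  set P : ℝ → Matrix (Fin n) (Fin n) ℝ :=
    fun t => U.offDiagScale t * diagonal (fun i => (U i i)⁻¹) * L.offDiagScale t
  have hP0 : P 0 = 1 := by
    simp [P, offDiagScale_zero, diagonal_mul_diagonal, hLU.lower_diag, hLU.upper_diag_ne_zero]
  have hP : Continuous P :=
    ((continuous_offDiagScale U).matrix_mul continuous_const).matrix_mul
      (continuous_offDiagScale L)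
  have hP_dom : ∀ᶠ t in 𝓝 0, (P t).IsPosDiagDominant :=
    hP.continuousAt.eventually_mem
      (isOpen_setOf_isPosDiagDominant.mem_nhds (hP0 ▸ isPosDiagDominant_one))
  obtain ⟨t, hPt, ht⟩ : ∃ t, (P t).IsPosDiagDominant ∧ 0 < t :=
    ((hP_dom.filter_mono nhdsWithin_le_nhds).and (self_mem_nhdsWithin (s := Set.Ioi 0))).exists
  refine ⟨fun i => t ^ (2 * (i : ℕ)) * (U i i)⁻¹, fun μ hμ => ?_⟩
  rw [hLU.eq_mul, spectrum_diagonal_mul_lu hLU.lower hLU.upper] at hμ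
  exact (hPt.diagonal_mul fun i => pow_pos ht _).re_pos_of_mem_spectrum hμ
end
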